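/- arXiv:1301.5875 — 2 statements merged into one kernel-verified Lean document; each statement's English description precedes it below -/
import Mathlib

section
/- For every n-partite full-correlation box with associated Boolean function f whose degree-≥2 monomial supports 𝒥 have a connected intersection graph, the box can be simulated exactly using |𝒥| generalized PR boxes (each on the variables of one monomial, possibly with constant-1 inputs for absent parties), local even-parity boxes, and XOR-ing of outputs: party i outputs the XOR of its outputs from all boxes in which it participates, and the joint distribution equals the full-correlation box of f. -/
/-!
Conditioned on the outputs `b I` of the PR boxes, the output `c = e + ∑ I, b I` is a translate of
the even-parity output `e`, hence uniform among the strings of parity `∑ I, ∑ i, b I i`, which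
equals `∑ I, ∏ i ∈ I, x i = f x` on every PR-box outcome of positive probability. Averaging over
the PR boxes, whose joint weights sum to one, leaves the full-correlation box of `f`.
-/

open Finset

theorem sum_ite_sum_eq_card_pow_nsmul {G M : Type*} [AddCommGroup G] [Fintype G] [DecidableEq G]
    [AddCommMonoid M] (m : ℕ) (t : G) (r : M) :
    ∑ v : Fin (m + 1) → G, (if ∑ i, v i = t then r else 0) = Fintype.card G ^ m • r := by
  rw [← (Fin.consEquiv fun _ => G).sum_comp, Fintype.sum_prod_type, sum_comm]
  simp only [Fin.consEquiv_apply, Fin.sum_univ_succ, Fin.cons_zero, Fin.cons_succ,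
    ← eq_sub_iff_add_eq, sum_ite_eq', mem_univ, if_true, sum_const, card_univ,
    Fintype.card_fun, Fintype.card_fin]

theorem sum_mul_ite_eq_add {G M : Type*} [AddGroup G] [Fintype G] [DecidableEq G]
    [NonAssocSemiring M] (g : G → M) (c d : G) :
    ∑ e, g e * (if c = e + d then 1 else 0) = g (c - d) := by
  simp only [mul_ite, mul_one, mul_zero, ← sub_eq_iff_eq_add, sum_ite_eq, mem_univ, if_true]

theorem sum_supported_prod_eq_prod_sum {ι κ M : Type*} [Fintype ι] [DecidableEq ι] [Fintype κ]
    [DecidableEq κ] [Zero κ] [CommSemiring M] (S : Finset ι) (g : ι → κ → M) :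
    ∑ b : ι → κ, (if ∀ i ∉ S, b i = 0 then ∏ i ∈ S, g i (b i) else 0) = ∏ i ∈ S, ∑ k, g i k := by
  have factor (b : ι → κ) : (if ∀ i ∉ S, b i = 0 then ∏ i ∈ S, g i (b i) else 0) =
      ∏ i, if i ∈ S then g i (b i) else if b i = 0 then 1 else 0 := by
    rw [prod_ite, prod_boole, filter_mem_eq_inter, univ_inter]
    simp only [mem_filter, mem_univ, true_and]
    split_ifs <;> simp_all
  simp only [factor,
    ← Fintype.prod_sum fun i k => if i ∈ S then g i k else if k = 0 then 1 else 0]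
  rw [← Fintype.prod_ite_mem S fun i => ∑ k, g i k]
  refine prod_congr rfl fun i _ => ?_
  split_ifs <;> simp

theorem ZMod.sum_mul_eq_sum_filter_eq_one {ι : Type*} (s : Finset ι) (a g : ι → ZMod 2) :
    ∑ i ∈ s, a i * g i = ∑ i ∈ s with a i = 1, g i := by
  rw [sum_filter]
  refine sum_congr rfl fun i _ => ?_
  rcases (by decide : ∀ z : ZMod 2, z = 0 ∨ z = 1) (a i) with h | h <;> simp [h]

-- The full-correlation box of `f` at `x` is `parityBox n (f x)`, a generalized PR box on `I`
-- is `parityBox n (∏ i ∈ I, x i)`.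
noncomputable def parityBox (n : ℕ) (t : ZMod 2) (v : Fin n → ZMod 2) : ℝ :=
  if ∑ i, v i = t then 2 ^ (-((n : ℤ) - 1)) else 0

theorem sum_parityBox {n : ℕ} (hn : 1 ≤ n) (t : ZMod 2) : ∑ v, parityBox n t v = 1 := by
  obtain ⟨m, rfl⟩ := Nat.exists_eq_add_of_le' hn
  simp only [parityBox, sum_ite_sum_eq_card_pow_nsmul, ZMod.card, nsmul_eq_mul]
  push_cast
  simp

theorem parityBox_sub (n : ℕ) (t : ZMod 2) (c d : Fin n → ZMod 2) :
    parityBox n t (c - d) = parityBox n (t + ∑ i, d i) c := by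
  simp only [parityBox, Pi.sub_apply, sum_sub_distrib, sub_eq_iff_eq_add]

theorem sum_eq_of_parityBox_ne_zero {n : ℕ} {t : ZMod 2} {v : Fin n → ZMod 2}
    (h : parityBox n t v ≠ 0) : ∑ i, v i = t :=
  of_not_not fun h' => h (if_neg h')

theorem sum_xor_parityBoxes {ι : Type*} [Fintype ι] [DecidableEq ι] {n : ℕ} (hn : 1 ≤ n)
    (S : Finset ι) (t : ι → ZMod 2) (c : Fin n → ZMod 2) :
    ∑ e, ∑ b : ι → Fin n → ZMod 2, parityBox n 0 e *
        (if ∀ I ∉ S, b I = 0 then ∏ I ∈ S, parityBox n (t I) (b I) else 0) *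
        (if c = (fun i => e i + ∑ I ∈ S, b I i) then 1 else 0) =
      parityBox n (∑ I ∈ S, t I) c := by
  set B : (ι → Fin n → ZMod 2) → ℝ :=
    fun b => if ∀ I ∉ S, b I = 0 then ∏ I ∈ S, parityBox n (t I) (b I) else 0
  have parity_of_ne_zero (b) (hb : B b ≠ 0) : ∑ i, ∑ I ∈ S, b I i = ∑ I ∈ S, t I := by
    have hS : ∏ I ∈ S, parityBox n (t I) (b I) ≠ 0 := fun h => hb (by simp [B, h])
    rw [sum_comm]
    exact sum_congr rfl fun I hI => sum_eq_of_parityBox_ne_zero (prod_ne_zero_iff.1 hS I hI)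
  have collapse (b) : ∑ e, parityBox n 0 e * B b *
      (if c = (fun i => e i + ∑ I ∈ S, b I i) then 1 else 0) =
      B b * parityBox n (∑ I ∈ S, t I) c := by
    refine (sum_mul_ite_eq_add (fun e => parityBox n 0 e * B b) c
      fun i => ∑ I ∈ S, b I i).trans ?_
    rw [parityBox_sub, zero_add, mul_comm]
    by_cases hb : B b = 0
    · simp [hb]
    · rw [parity_of_ne_zero b hb]
  rw [sum_comm, sum_congr rfl fun b _ => collapse b, ← sum_mul, sum_supported_prod_eq_prod_sum,
    prod_eq_one fun I _ => sum_parityBox hn (t I), one_mul]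

theorem full_correlation_box_simulated_by_PR_boxes_general (n : ℕ) (hn : 1 ≤ n)
    (f : (Fin n → ZMod 2) → ZMod 2)
    (a : Finset (Fin n) → ZMod 2)
    (hf : ∀ x : Fin n → ZMod 2, f x = ∑ I : Finset (Fin n), a I * ∏ i ∈ I, x i) :
    -- the XOR of one shared even-parity box and, for each monomial I with a_I = 1,
    -- an independent n-PR box where party i inputs x_i if i ∈ I and 1 otherwise,
    -- reproduces the full-correlation box of f
    ∀ c x : Fin n → ZMod 2,
      (∑ e : Fin n → ZMod 2, ∑ b : Finset (Fin n) → (Fin n → ZMod 2),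
        (if (∑ i, e i) = 0 then ((2:ℝ) ^ (-((n:ℤ) - 1))) else 0)
        * (if ∀ I ∉ Finset.univ.filter (fun I : Finset (Fin n) => a I = 1), b I = 0
            then ∏ I ∈ Finset.univ.filter (fun I : Finset (Fin n) => a I = 1),
              (if (∑ i, b I i) = (∏ i ∈ I, x i) then ((2:ℝ) ^ (-((n:ℤ) - 1))) else 0)
            else 0)
        * (if c = (fun i => e i + ∑ I ∈ Finset.univ.filter
              (fun I : Finset (Fin n) => a I = 1), b I i) then 1 else 0))
      = (if (∑ i, c i) = f x then ((2:ℝ) ^ (-((n:ℤ) - 1))) else 0) := by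
  intro c x
  rw [hf x, ZMod.sum_mul_eq_sum_filter_eq_one]
  exact sum_xor_parityBoxes hn _ (fun I => ∏ i ∈ I, x i) c

theorem full_correlation_box_simulated_by_PR_boxes (n : ℕ) (hn : 1 ≤ n)
    (f : (Fin n → ZMod 2) → ZMod 2)
    (a : Finset (Fin n) → ZMod 2)
    (hf : ∀ x : Fin n → ZMod 2, f x = ∑ I : Finset (Fin n), a I * ∏ i ∈ I, x i)
    -- 𝒥: the degree-≥2 monomial supports; its intersection graph is connected
    (hconn : ∀ A : Finset (Finset (Fin n)),
      A ⊆ Finset.univ.filter (fun I : Finset (Fin n) => a I = 1 ∧ 2 ≤ I.card) →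
      A.Nonempty →
      ((Finset.univ.filter (fun I : Finset (Fin n) => a I = 1 ∧ 2 ≤ I.card)) \ A).Nonempty →
      ¬ Disjoint (A.biUnion id)
        (((Finset.univ.filter (fun I : Finset (Fin n) => a I = 1 ∧ 2 ≤ I.card)) \ A).biUnion id)) :
    -- the XOR of one shared even-parity box and, for each monomial I with a_I = 1,
    -- an independent n-PR box where party i inputs x_i if i ∈ I and 1 otherwise,
    -- reproduces the full-correlation box of f
    ∀ c x : Fin n → ZMod 2,
      (∑ e : Fin n → ZMod 2, ∑ b : Finset (Fin n) → (Fin n → ZMod 2),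
        (if (∑ i, e i) = 0 then ((2:ℝ) ^ (-((n:ℤ) - 1))) else 0)
        * (if ∀ I ∉ Finset.univ.filter (fun I : Finset (Fin n) => a I = 1), b I = 0
            then ∏ I ∈ Finset.univ.filter (fun I : Finset (Fin n) => a I = 1),
              (if (∑ i, b I i) = (∏ i ∈ I, x i) then ((2:ℝ) ^ (-((n:ℤ) - 1))) else 0)
            else 0)
        * (if c = (fun i => e i + ∑ I ∈ Finset.univ.filter
              (fun I : Finset (Fin n) => a I = 1), b I i) then 1 else 0))
      = (if (∑ i, c i) = f x then ((2:ℝ) ^ (-((n:ℤ) - 1))) else 0) :=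
  full_correlation_box_simulated_by_PR_boxes_general n hn f a hf
end

section
/- For any ε ∈ (0,1) and any δ > 0, there exists m such that the m-th iterate of T₃(ε) = (ε/4)·(5 − ε) starting from ε exceeds 1 − δ. -/
/-!
Writing `T e = e / k * (k + 1 - e)` for the distillation map (`k = 4` in the tripartite case),
one has `1 - T e = (1 - e) * (k - e) / k`. Hence `e ≤ T e ≤ 1` on `[ε, 1]`, so the orbit of `ε`
stays in `[ε, 1]`, and there the distance to the fixed point `1` shrinks at least by the factor
`(k - ε) / k < 1` at every step.
-/

open Set Filter Topology

section Contraction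

variable {α : Type*} [PseudoMetricSpace α] {f : α → α} {s : Set α} {c : α} {r : ℝ}

theorem Set.MapsTo.dist_iterate_le (hf : MapsTo f s s)
    (hcontr : ∀ x ∈ s, dist (f x) c ≤ r * dist x c) (hr : 0 ≤ r) {x : α} (hx : x ∈ s) (n : ℕ) :
    dist (f^[n] x) c ≤ r ^ n * dist x c := by
  induction n with
  | zero => simp
  | succ n ih =>
    calc dist (f^[n + 1] x) c = dist (f (f^[n] x)) c := by rw [Function.iterate_succ_apply']
      _ ≤ r * dist (f^[n] x) c := hcontr _ (hf.iterate n hx)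
      _ ≤ r * (r ^ n * dist x c) := by gcongr
      _ = r ^ (n + 1) * dist x c := by ring

theorem Set.MapsTo.tendsto_iterate_of_dist_le (hf : MapsTo f s s)
    (hcontr : ∀ x ∈ s, dist (f x) c ≤ r * dist x c) (hr0 : 0 ≤ r) (hr1 : r < 1)
    {x : α} (hx : x ∈ s) :
    Tendsto (fun n => f^[n] x) atTop (𝓝 c) := by
  rw [tendsto_iff_dist_tendsto_zero]
  have hpow : Tendsto (fun n => r ^ n * dist x c) atTop (𝓝 0) := by
    simpa using (tendsto_pow_atTop_nhds_zero_of_lt_one hr0 hr1).mul_const (dist x c)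
  exact squeeze_zero (fun _ => dist_nonneg) (hf.dist_iterate_le hcontr hr0 hx) hpow

end Contraction

noncomputable section

def bsMap (k e : ℝ) : ℝ := e / k * (k + 1 - e)

variable {k ε e : ℝ}

theorem one_sub_bsMap (hk : k ≠ 0) : 1 - bsMap k e = (1 - e) * ((k - e) / k) := by
  unfold bsMap
  field_simp
  ring

theorem le_bsMap (hk : 0 < k) (he0 : 0 ≤ e) (he1 : e ≤ 1) : e ≤ bsMap k e := by
  have : bsMap k e - e = e * (1 - e) / k := by
    unfold bsMap
    field_simp
    ring
  have : 0 ≤ e * (1 - e) / k := by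
    apply div_nonneg (mul_nonneg he0 (by linarith)) hk.le
  linarith

theorem bsMap_le_one (hk : 1 ≤ k) (he1 : e ≤ 1) : bsMap k e ≤ 1 := by
  have h := one_sub_bsMap (e := e) (by positivity : k ≠ 0)
  have : 0 ≤ (1 - e) * ((k - e) / k) :=
    mul_nonneg (by linarith) (div_nonneg (by linarith) (by linarith))
  linarith

theorem mapsTo_bsMap_Icc (hk : 1 ≤ k) (hε : 0 ≤ ε) : MapsTo (bsMap k) (Icc ε 1) (Icc ε 1) :=
  fun _ ⟨he0, he1⟩ =>
    ⟨he0.trans (le_bsMap (by linarith) (hε.trans he0) he1), bsMap_le_one hk he1⟩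

theorem dist_bsMap_one_le (hk : 1 ≤ k) (he : e ∈ Icc ε 1) :
    dist (bsMap k e) 1 ≤ (k - ε) / k * dist e 1 := by
  have hk0 : 0 < k := by linarith
  rw [dist_comm, dist_comm e, Real.dist_eq, Real.dist_eq,
    abs_of_nonneg (by linarith [bsMap_le_one hk he.2]), abs_of_nonneg (by linarith [he.2]),
    one_sub_bsMap hk0.ne', mul_comm]
  gcongr
  · linarith [he.2]
  · exact he.1

theorem tendsto_iterate_bsMap_one (hk : 1 ≤ k) (h0 : 0 < ε) (h1 : ε ≤ 1) :
    Tendsto (fun n => (bsMap k)^[n] ε) atTop (𝓝 1) := by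
  have hk0 : 0 < k := by linarith
  refine (mapsTo_bsMap_Icc hk h0.le).tendsto_iterate_of_dist_le
    (fun _ he => dist_bsMap_one_le hk he) ?_ ?_ ⟨le_rfl, h1⟩
  · exact div_nonneg (by linarith) hk0.le
  · rw [div_lt_one hk0]
    linarith

end

theorem tripartite_bs_distills_arbitrarily_close (ε : ℝ) (h0 : 0 < ε) (h1 : ε < 1)
    (δ : ℝ) (hδ : 0 < δ) :
    ∃ m : ℕ, (fun e : ℝ => e / 4 * (5 - e))^[m] ε > 1 - δ := by
  have hT : (fun e : ℝ => e / 4 * (5 - e)) = bsMap 4 := by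
    funext e
    norm_num [bsMap]
  rw [hT]
  exact ((tendsto_order.1 (tendsto_iterate_bsMap_one (by norm_num) h0 h1.le)).1 _
    (by linarith)).exists
end
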